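/- arXiv:2505.12303 — 5 statements merged into one kernel-verified Lean document; each statement's English description precedes it below -/
import Mathlib

section
/- For the ladder n-level closed-loop system, along any closed-loop solution ψ the Lyapunov function value t ↦ V(ψ(t)) = 1 − |ψₙ(t)|² is differentiable with derivative d/dt V(ψ(t)) = −2 k_{n−1} |ψₙ(t)| · |c_{n−1}(ψ(t))|^{α_{n−1}+1} for every t ≥ 0; in particular t ↦ V(ψ(t)) is nonincreasing. -/
open scoped BigOperators

/-- The real matrix `X_p` (embedded in ℂ) of the ladder system: entry `-1` at
position `(p, p+1)` and entry `1` at position `(p+1, p)` (0-based indices),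
all other entries `0`. -/
noncomputable def ladderX (n : ℕ) (p : ℕ) : Matrix (Fin n) (Fin n) ℂ :=
  Matrix.of fun i j =>
    if (i : ℕ) = p ∧ (j : ℕ) = p + 1 then -1
    else if (i : ℕ) = p + 1 ∧ (j : ℕ) = p then 1 else 0

/-- The control Hamiltonian `H_p = i X_p`. -/
noncomputable def ladderHc (n : ℕ) (p : ℕ) : Matrix (Fin n) (Fin n) ℂ :=
  Complex.I • ladderX n p

/-- `c_p(ψ) = |ψ_p| cos (arg ψ_{p+1} - arg ψ_p)` (0-based indices, so this is the
`p`-th control channel coupling levels `p` and `p+1`); `arg 0 = 0` by convention. -/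
noncomputable def ladderC (n : ℕ) (p : ℕ) (ψ : Fin n → ℂ) : ℝ :=
  if h : p + 1 < n then
    ‖ψ ⟨p, Nat.lt_of_succ_lt h⟩‖ *
      Real.cos ((ψ ⟨p + 1, h⟩).arg - (ψ ⟨p, Nat.lt_of_succ_lt h⟩).arg)
  else 0

/-- The feedback control `u_p(ψ) = k_p sign(c_p(ψ)) |c_p(ψ)|^{α_p}` (real power). -/
noncomputable def ladderU (n : ℕ) (k α : ℕ → ℝ) (p : ℕ) (ψ : Fin n → ℂ) : ℝ :=
  k p * Real.sign (ladderC n p ψ) * |ladderC n p ψ| ^ (α p)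

/-- A closed-loop solution: a continuously differentiable `ψ : [0,∞) → ℂⁿ` with
`i ψ'(t) = (H₀ + ∑_p u_p(ψ(t)) H_p) ψ(t)` for all `t ≥ 0`, where
`H₀ = diag(λ₁,…,λₙ)`. -/
def IsLadderSolution (n : ℕ) (lam : Fin n → ℝ) (k α : ℕ → ℝ)
    (ψ : ℝ → Fin n → ℂ) : Prop :=
  ContDiffOn ℝ 1 ψ (Set.Ici 0) ∧
  ∀ t ∈ Set.Ici (0 : ℝ),
    Complex.I • derivWithin ψ (Set.Ici 0) t =
      (Matrix.diagonal (fun i => (lam i : ℂ)) +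
        ∑ p ∈ Finset.range (n - 1), (ladderU n k α p (ψ t) : ℂ) • ladderHc n p).mulVec (ψ t)

/-!
Only the last control channel couples to the last level, so along a solution
`ψₙ' = -i λₙ ψₙ + u_{n-1} ψ_{n-1}`. The diagonal term merely rotates the phase of `ψₙ`, hence
`d/dt |ψₙ|² = 2 u_{n-1} Re(ψ̄ₙ ψ_{n-1}) = 2 u_{n-1} |ψₙ| c_{n-1}`, and
`u_{n-1} c_{n-1} = k_{n-1} |c_{n-1}|^{α_{n-1}+1} ≥ 0` because the feedback carries the sign of
`c_{n-1}`.
-/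

open Finset Matrix Complex

theorem Real.sign_mul_self_eq_abs (r : ℝ) : Real.sign r * r = |r| := by
  rcases lt_trichotomy r 0 with h | rfl | h
  · rw [Real.sign_of_neg h, abs_of_neg h, neg_one_mul]
  · simp
  · rw [Real.sign_of_pos h, abs_of_pos h, one_mul]

theorem Real.sign_mul_abs_rpow_mul_self {α : ℝ} (hα : α + 1 ≠ 0) (r : ℝ) :
    Real.sign r * |r| ^ α * r = |r| ^ (α + 1) := by
  rw [Real.rpow_add_one' (abs_nonneg r) hα, mul_right_comm, Real.sign_mul_self_eq_abs, mul_comm]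

theorem Complex.real_inner_eq_norm_mul_norm_mul_cos_arg_sub (a b : ℂ) :
    inner ℝ a b = ‖a‖ * ‖b‖ * Real.cos (a.arg - b.arg) := by
  rw [Complex.inner, mul_re, conj_re, conj_im, Real.cos_sub, ← norm_mul_cos_arg a,
    ← norm_mul_sin_arg a, ← norm_mul_cos_arg b, ← norm_mul_sin_arg b]
  ring

theorem ladderX_mulVec_apply_of_eq_succ {n p : ℕ} {i j : Fin n} (hi : (i : ℕ) = p + 1)
    (hj : (j : ℕ) = p) (v : Fin n → ℂ) : (ladderX n p *ᵥ v) i = v j := by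
  rw [mulVec, dotProduct, Finset.sum_eq_single j]
  · simp [ladderX, hi, hj]
  · intro l _ hl
    have hl' : (l : ℕ) ≠ p := fun h => hl (Fin.ext (h.trans hj.symm))
    simp [ladderX, hi, hl']
  · simp

theorem ladderX_mulVec_apply_eq_zero {n p : ℕ} {i : Fin n} (h₁ : (i : ℕ) ≠ p)
    (h₂ : (i : ℕ) ≠ p + 1) (v : Fin n → ℂ) : (ladderX n p *ᵥ v) i = 0 := by
  simp [mulVec, dotProduct, ladderX, h₁, h₂]

theorem ladder_mulVec_apply_last {n p : ℕ} (hp : p + 2 = n) {i j : Fin n}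
    (hi : (i : ℕ) = p + 1) (hj : (j : ℕ) = p) (lam : Fin n → ℝ) (u : ℕ → ℂ) (v : Fin n → ℂ) :
    ((diagonal (fun i => (lam i : ℂ)) + ∑ q ∈ range (n - 1), u q • ladderHc n q) *ᵥ v) i =
      lam i * v i + u p * I * v j := by
  have hchannel : ∀ q ∈ range (n - 1), ((u q • ladderHc n q) *ᵥ v) i =
      if q = p then u p * I * v j else 0 := by
    intro q hq
    have hq : q < n - 1 := mem_range.1 hq
    simp only [ladderHc, smul_mulVec, Pi.smul_apply, smul_eq_mul]
    split_ifs with hlast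
    · subst hlast
      rw [ladderX_mulVec_apply_of_eq_succ hi hj, mul_assoc]
    · rw [ladderX_mulVec_apply_eq_zero (by omega) (by omega), mul_zero, mul_zero]
  rw [add_mulVec, sum_mulVec, Pi.add_apply, mulVec_diagonal, Finset.sum_apply,
    sum_congr rfl hchannel, sum_ite_eq' (range (n - 1)), if_pos (mem_range.2 (by omega))]

theorem ladderC_eq {n p : ℕ} {i j : Fin n} (hi : (i : ℕ) = p) (hj : (j : ℕ) = p + 1)
    (ψ : Fin n → ℂ) : ladderC n p ψ = ‖ψ i‖ * Real.cos ((ψ j).arg - (ψ i).arg) := by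
  obtain ⟨i, hi'⟩ := i
  obtain ⟨j, hj'⟩ := j
  simp only at hi hj
  subst hi hj
  rw [ladderC, dif_pos hj']

theorem ladderU_mul_ladderC {n : ℕ} {k α : ℕ → ℝ} {p : ℕ} (hα : α p + 1 ≠ 0)
    (ψ : Fin n → ℂ) :
    ladderU n k α p ψ * ladderC n p ψ = k p * |ladderC n p ψ| ^ (α p + 1) := by
  rw [ladderU, mul_assoc, mul_assoc, ← mul_assoc (Real.sign _),
    Real.sign_mul_abs_rpow_mul_self hα]

namespace IsLadderSolution

variable {n p : ℕ} {lam : Fin n → ℝ} {k α : ℕ → ℝ} {ψ : ℝ → Fin n → ℂ}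
  (hψ : IsLadderSolution n lam k α ψ) (hp : p + 2 = n) {i j : Fin n}
  (hi : (i : ℕ) = p + 1) (hj : (j : ℕ) = p) {t : ℝ} (ht : t ∈ Set.Ici 0)
include hψ hp hi hj ht

theorem hasDerivWithinAt_last :
    HasDerivWithinAt (fun s => ψ s i)
      (-I * lam i * ψ t i + ladderU n k α p (ψ t) * ψ t j) (Set.Ici 0) t := by
  have hψ' : HasDerivWithinAt ψ (derivWithin ψ (Set.Ici 0) t) (Set.Ici 0) t :=
    ((hψ.1.differentiableOn one_ne_zero) t ht).hasDerivWithinAt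
  have hode := congrFun (hψ.2 t ht) i
  rw [Pi.smul_apply, smul_eq_mul, ladder_mulVec_apply_last hp hi hj] at hode
  refine (hasDerivWithinAt_pi.1 hψ' i).congr_deriv (mul_left_cancel₀ I_ne_zero ?_)
  rw [hode]
  linear_combination (lam i * ψ t i) * I_mul_I

theorem hasDerivWithinAt_norm_sq_last (hα : α p + 1 ≠ 0) :
    HasDerivWithinAt (fun s => ‖ψ s i‖ ^ 2)
      (2 * k p * ‖ψ t i‖ * |ladderC n p (ψ t)| ^ (α p + 1)) (Set.Ici 0) t := by
  have hdrift : inner ℝ (ψ t i) (-I * lam i * ψ t i + ladderU n k α p (ψ t) * ψ t j) =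
      ladderU n k α p (ψ t) * inner ℝ (ψ t i) (ψ t j) := by
    simp only [Complex.inner, mul_re, add_re, add_im, mul_im, neg_re, neg_im, I_re, I_im,
      ofReal_re, ofReal_im, conj_re, conj_im]
    ring
  refine (hψ.hasDerivWithinAt_last hp hi hj ht).norm_sq.congr_deriv ?_
  rw [hdrift, real_inner_eq_norm_mul_norm_mul_cos_arg_sub, mul_assoc ‖ψ t i‖,
    ← ladderC_eq hj hi]
  linear_combination (2 * ‖ψ t i‖) * ladderU_mul_ladderC (k := k) hα (ψ t)

end IsLadderSolution

/-- Along any closed-loop solution of the ladder n-level system, the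
Lyapunov function `t ↦ V(ψ(t)) = 1 - |ψₙ(t)|²` is differentiable with derivative
`-2 k_{n-1} |ψₙ(t)| |c_{n-1}(ψ(t))|^{α_{n-1}+1}` for all `t ≥ 0` (the last control
channel has 0-based index `n-2`); in particular `t ↦ V(ψ(t))` is nonincreasing. -/
theorem ladder_lyapunov_derivative
    (n : ℕ) (hn : 2 ≤ n) (lam : Fin n → ℝ)
    (k α : ℕ → ℝ) (hk : ∀ p, p < n - 1 → 0 < k p)
    (hα : ∀ p, p < n - 1 → α p ∈ Set.Ioo (0 : ℝ) 1)
    (ψ : ℝ → Fin n → ℂ) (hψ : IsLadderSolution n lam k α ψ) :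
    (∀ t ∈ Set.Ici (0 : ℝ),
      HasDerivWithinAt (fun s => 1 - ‖ψ s ⟨n - 1, by omega⟩‖ ^ 2)
        (-2 * k (n - 2) * ‖ψ t ⟨n - 1, by omega⟩‖ *
          |ladderC n (n - 2) (ψ t)| ^ (α (n - 2) + 1))
        (Set.Ici 0) t) ∧
    AntitoneOn (fun s => 1 - ‖ψ s ⟨n - 1, by omega⟩‖ ^ 2) (Set.Ici 0) := by
  have hα' : α (n - 2) + 1 ≠ 0 := by linarith [(hα (n - 2) (by omega)).1]
  have hk' : 0 < k (n - 2) := hk (n - 2) (by omega)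
  have hV : ∀ t ∈ Set.Ici (0 : ℝ),
      HasDerivWithinAt (fun s => 1 - ‖ψ s ⟨n - 1, by omega⟩‖ ^ 2)
        (-2 * k (n - 2) * ‖ψ t ⟨n - 1, by omega⟩‖ *
          |ladderC n (n - 2) (ψ t)| ^ (α (n - 2) + 1)) (Set.Ici 0) t := fun t ht => by
    simpa only [neg_mul] using
      (hψ.hasDerivWithinAt_norm_sq_last (p := n - 2) (i := ⟨n - 1, by omega⟩)
        (j := ⟨n - 2, by omega⟩) (by omega) (by simp only; omega) rfl ht hα').const_sub 1
  refine ⟨hV, antitoneOn_of_hasDerivWithinAt_nonpos (convex_Ici 0)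
    (fun t ht => (hV t ht).continuousWithinAt)
    (fun t ht => (hV t (interior_subset ht)).mono interior_subset) fun t _ => ?_⟩
  have : 0 ≤ 2 * k (n - 2) * ‖ψ t ⟨n - 1, by omega⟩‖ *
      |ladderC n (n - 2) (ψ t)| ^ (α (n - 2) + 1) := by positivity
  linarith
end

section
/- Let H₀, H₁, …, H_r be n×n Hermitian complex matrices, let ψ_f ∈ ℂⁿ be a unit vector satisfying H₀ ψ_f = λ ψ_f for some real λ, let u₁, …, u_r : ℝ → ℝ be continuous, and let ψ : ℝ → ℂⁿ be a continuously differentiable solution of the controlled Schrödinger equation i ψ′(t) = (H₀ + Σ_{j=1}^{r} u_j(t) H_j) ψ(t). Then the Lyapunov function V(t) = 1 − |⟨ψ_f, ψ(t)⟩|² is differentiable with V′(t) = −2 Σ_{j=1}^{r} u_j(t) · Im( ⟨ψ_f, H_j ψ(t)⟩ · ⟨ψ(t), ψ_f⟩ ) for every t. -/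
/-! With `c(t) = ⟨ψf, ψ(t)⟩` one has `V' = -2 Re(c' · conj c)`. By the Schrödinger equation,
`c' = -i (λ c + ∑ⱼ uⱼ ⟨ψf, Hⱼ ψ⟩)`, since `ψf` is an eigenvector of the Hermitian `H₀` with real
eigenvalue and so `⟨ψf, H₀ ψ⟩ = λ c`. The drift contribution `-i λ |c|²` is purely imaginary and
drops out of the real part, leaving only the control terms. -/

open scoped ComplexConjugate Matrix
open Complex

theorem Matrix.IsHermitian.star_dotProduct_mulVec_of_eigenvector {𝕜 ι : Type*} [RCLike 𝕜]
    [Fintype ι] {A : Matrix ι ι 𝕜} (hA : A.IsHermitian) {v : ι → 𝕜} {lam : ℝ}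
    (hv : A *ᵥ v = (lam : 𝕜) • v) (w : ι → 𝕜) :
    star v ⬝ᵥ (A *ᵥ w) = lam * (star v ⬝ᵥ w) := by
  have hrow : star v ᵥ* A = (lam : 𝕜) • star v := by
    conv_lhs => rw [← hA.eq]
    rw [← Matrix.star_mulVec, hv, star_smul, RCLike.star_def, RCLike.conj_ofReal]
  rw [Matrix.dotProduct_mulVec, hrow, smul_dotProduct, smul_eq_mul]

theorem HasDerivAt.dotProduct_const_left {𝕜 𝔸 ι : Type*} [NontriviallyNormedField 𝕜]
    [NormedRing 𝔸] [NormedAlgebra 𝕜 𝔸] [Fintype ι] (v : ι → 𝔸) {f : 𝕜 → ι → 𝔸}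
    {f' : ι → 𝔸} {t : 𝕜} (hf : HasDerivAt f f' t) :
    HasDerivAt (fun s => v ⬝ᵥ f s) (v ⬝ᵥ f') t :=
  HasDerivAt.fun_sum fun i _ => ((hasDerivAt_pi.mp hf) i).const_mul (v i)

theorem re_neg_I_mul_ofReal_mul_add_mul_conj (c S : ℂ) (lam : ℝ) :
    (-I * (lam * c + S) * conj c).re = (S * conj c).im := by
  simp only [mul_re, mul_im, neg_re, neg_im, I_re, I_im, add_re, add_im, ofReal_re,
    ofReal_im, conj_re, conj_im]
  ring

theorem lyapunov_derivative_general_general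
    (n r : ℕ) (H0 : Matrix (Fin n) (Fin n) ℂ) (H : Fin r → Matrix (Fin n) (Fin n) ℂ)
    (hH0 : H0.IsHermitian)
    (ψf : Fin n → ℂ)
    (lam : ℝ) (heig : H0.mulVec ψf = (lam : ℂ) • ψf)
    (u : Fin r → ℝ → ℝ)
    (ψ : ℝ → Fin n → ℂ) (hψ : ContDiff ℝ 1 ψ)
    (heq : ∀ t, Complex.I • deriv ψ t =
      (H0 + ∑ j, ((u j t : ℝ) : ℂ) • H j).mulVec (ψ t)) :
    ∀ t, HasDerivAt (fun s => 1 - ‖∑ i, conj (ψf i) * ψ s i‖ ^ 2)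
      (-2 * ∑ j, u j t *
        ((∑ i, conj (ψf i) * (H j).mulVec (ψ t) i) * (∑ i, conj (ψ t i) * ψf i)).im) t := by
  intro t
  set c : ℂ := star ψf ⬝ᵥ ψ t
  set S : ℂ := ∑ j, (u j t : ℂ) * (star ψf ⬝ᵥ (H j *ᵥ ψ t))
  have hψ' : deriv ψ t = -I • (H0 + ∑ j, (u j t : ℂ) • H j) *ᵥ ψ t := by
    rw [← heq t, smul_smul, neg_mul, I_mul_I, neg_neg, one_smul]
  have hc' : star ψf ⬝ᵥ deriv ψ t = -I * (lam * c + S) := by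
    rw [hψ', dotProduct_smul, Matrix.add_mulVec, dotProduct_add,
      hH0.star_dotProduct_mulVec_of_eigenvector heig, Matrix.sum_mulVec, dotProduct_sum]
    simp only [Matrix.smul_mulVec, dotProduct_smul, smul_eq_mul]
    rfl
  have hc : HasDerivAt (fun s => star ψf ⬝ᵥ ψ s) (-I * (lam * c + S)) t :=
    hc' ▸ ((hψ.differentiable one_ne_zero t).hasDerivAt.dotProduct_const_left (star ψf))
  have hconj : ∑ i, conj (ψ t i) * ψf i = conj c := by
    simp [c, dotProduct, mul_comm]
  refine (hc.norm_sq.const_sub 1).congr_deriv ?_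
  rw [hconj]
  change _ = -2 * ∑ j, u j t * ((star ψf ⬝ᵥ (H j *ᵥ ψ t)) * conj c).im
  rw [Complex.inner, re_neg_I_mul_ofReal_mul_add_mul_conj, Finset.sum_mul, im_sum]
  simp only [mul_assoc, im_ofReal_mul]
  ring

/-- Let `H₀, H₁, …, H_r` be `n×n` Hermitian matrices, `ψ_f` a unit
vector with `H₀ ψ_f = λ ψ_f` (`λ ∈ ℝ`), `u_j : ℝ → ℝ` continuous controls and
`ψ : ℝ → ℂⁿ` a continuously differentiable solution of
`i ψ'(t) = (H₀ + ∑_j u_j(t) H_j) ψ(t)`. Then `V(t) = 1 - |⟨ψ_f, ψ(t)⟩|²` is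
differentiable with
`V'(t) = -2 ∑_j u_j(t) Im(⟨ψ_f, H_j ψ(t)⟩ ⟨ψ(t), ψ_f⟩)` for every `t`.
Here `⟨x, y⟩ = ∑ i, conj (x i) * y i`. -/
theorem lyapunov_derivative_general
    (n r : ℕ) (H0 : Matrix (Fin n) (Fin n) ℂ) (H : Fin r → Matrix (Fin n) (Fin n) ℂ)
    (hH0 : H0.IsHermitian) (hH : ∀ j, (H j).IsHermitian)
    (ψf : Fin n → ℂ) (hψf : ∑ i, ‖ψf i‖ ^ 2 = 1)
    (lam : ℝ) (heig : H0.mulVec ψf = (lam : ℂ) • ψf)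
    (u : Fin r → ℝ → ℝ) (hu : ∀ j, Continuous (u j))
    (ψ : ℝ → Fin n → ℂ) (hψ : ContDiff ℝ 1 ψ)
    (heq : ∀ t, Complex.I • deriv ψ t =
      (H0 + ∑ j, ((u j t : ℝ) : ℂ) • H j).mulVec (ψ t)) :
    ∀ t, HasDerivAt (fun s => 1 - ‖∑ i, conj (ψf i) * ψ s i‖ ^ 2)
      (-2 * ∑ j, u j t *
        ((∑ i, conj (ψf i) * (H j).mulVec (ψ t) i) * (∑ i, conj (ψ t i) * ψf i)).im) t :=
  lyapunov_derivative_general_general n r H0 H hH0 ψf lam heig u ψ hψ heq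
end

section
/- Let V₁, V₂ : ℝ^m → ℝ be continuous functions, with V₁ positive definite (V₁(0) = 0 and V₁(x) > 0 for x ≠ 0), and suppose V₁ and V₂ are homogeneous of degrees l₁ > 0 and l₂ > 0 respectively, i.e., V₁(ε x) = ε^{l₁} V₁(x) and V₂(ε x) = ε^{l₂} V₂(x) for all ε > 0 and all x ∈ ℝ^m. Then for every r ∈ ℝ^m, ( min_{{z : V₁(z) = 1}} V₂(z) ) · (V₁(r))^{l₂/l₁} ≤ V₂(r) ≤ ( max_{{z : V₁(z) = 1}} V₂(z) ) · (V₁(r))^{l₂/l₁}, where the minimum and maximum over the level set {z : V₁(z) = 1} exist. -/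
open scoped BigOperators

/-- Let `V₁ V₂ : ℝᵐ → ℝ` (`m ≥ 1`) be continuous, `V₁` positive
definite, and `V₁, V₂` homogeneous of degrees `l₁ > 0`, `l₂ > 0` (real powers):
`Vᵢ(ε x) = ε^{lᵢ} Vᵢ(x)` for all `ε > 0`. Then the minimum `a` and maximum `b` of
`V₂` on the level set `{z : V₁ z = 1}` exist and, for every `r`,
`a (V₁ r)^{l₂/l₁} ≤ V₂ r ≤ b (V₁ r)^{l₂/l₁}`. -/
theorem homogeneous_sandwich
    (m : ℕ) (hm : 1 ≤ m) (V1 V2 : (Fin m → ℝ) → ℝ)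
    (hV1c : Continuous V1) (hV2c : Continuous V2)
    (hV1zero : V1 0 = 0) (hV1pos : ∀ x : Fin m → ℝ, x ≠ 0 → 0 < V1 x)
    (l1 l2 : ℝ) (hl1 : 0 < l1) (hl2 : 0 < l2)
    (hV1hom : ∀ ε : ℝ, 0 < ε → ∀ x, V1 (ε • x) = ε ^ l1 * V1 x)
    (hV2hom : ∀ ε : ℝ, 0 < ε → ∀ x, V2 (ε • x) = ε ^ l2 * V2 x) :
    ∃ a b : ℝ,
      IsLeast (V2 '' {z | V1 z = 1}) a ∧
      IsGreatest (V2 '' {z | V1 z = 1}) b ∧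
      ∀ r : Fin m → ℝ,
        a * (V1 r) ^ (l2 / l1) ≤ V2 r ∧ V2 r ≤ b * (V1 r) ^ (l2 / l1) := by
  -- V2 vanishes at 0
  have hV20 : V2 0 = 0 := by
    have h := hV2hom 2 two_pos 0
    rw [smul_zero] at h
    have h2 : (1:ℝ) < (2:ℝ) ^ l2 :=
      (Real.one_lt_rpow_iff_of_pos (by norm_num)).mpr (Or.inl ⟨by norm_num, hl2⟩)
    have key : V2 0 * (1 - 2 ^ l2) = 0 := by linear_combination h
    rcases mul_eq_zero.mp key with h' | h'
    · exact h'
    · linarith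
  set S : Set (Fin m → ℝ) := {z | V1 z = 1} with hS
  -- a nonzero vector exists
  have hx0 : ∃ x : Fin m → ℝ, x ≠ 0 := by
    refine ⟨Function.update 0 ⟨0, hm⟩ 1, ?_⟩
    intro h
    have := congrFun h ⟨0, hm⟩
    simp [Function.update] at this
  -- minimum of V1 on the unit sphere
  have hSphne : (Metric.sphere (0 : Fin m → ℝ) 1).Nonempty := by
    obtain ⟨x, hx⟩ := hx0
    refine ⟨‖x‖⁻¹ • x, ?_⟩
    have hnx : ‖x‖ ≠ 0 := norm_ne_zero_iff.mpr hx
    simp [mem_sphere_zero_iff_norm, norm_smul, abs_of_nonneg (norm_nonneg x),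
      inv_mul_cancel₀ hnx]
  obtain ⟨u, hu, humin⟩ :=
    (isCompact_sphere (0 : Fin m → ℝ) 1).exists_isMinOn hSphne hV1c.continuousOn
  have hune : u ≠ 0 := by
    intro h
    rw [mem_sphere_zero_iff_norm, h, norm_zero] at hu
    norm_num at hu
  set c : ℝ := V1 u with hc
  have hcpos : 0 < c := hV1pos u hune
  -- S is bounded
  have hSsub : S ⊆ Metric.closedBall 0 (c⁻¹ ^ l1⁻¹) := by
    intro z hz
    have hz1 : V1 z = 1 := hz
    have hzne : z ≠ 0 := by
      intro h; rw [h, hV1zero] at hz1; norm_num at hz1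
    have hnz : (0:ℝ) < ‖z‖ := norm_pos_iff.mpr hzne
    have huz : ‖z‖⁻¹ • z ∈ Metric.sphere (0 : Fin m → ℝ) 1 := by
      simp [mem_sphere_zero_iff_norm, norm_smul, abs_of_nonneg (norm_nonneg z),
        inv_mul_cancel₀ hnz.ne']
    have hcz : c ≤ V1 (‖z‖⁻¹ • z) := humin huz
    have hdec : V1 z = ‖z‖ ^ l1 * V1 (‖z‖⁻¹ • z) := by
      have := hV1hom ‖z‖ hnz (‖z‖⁻¹ • z)
      rw [smul_smul, mul_inv_cancel₀ hnz.ne', one_smul] at this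
      exact this
    have hrpos : 0 < ‖z‖ ^ l1 := Real.rpow_pos_of_pos hnz l1
    have hle : ‖z‖ ^ l1 ≤ c⁻¹ := by
      rw [hz1] at hdec
      have hVuz : 0 < V1 (‖z‖⁻¹ • z) := lt_of_lt_of_le hcpos hcz
      rw [← one_div, le_div_iff₀ hcpos]
      nlinarith
    rw [Metric.mem_closedBall, dist_zero_right]
    calc ‖z‖ = (‖z‖ ^ l1) ^ l1⁻¹ := by
          rw [← Real.rpow_mul (norm_nonneg z), mul_inv_cancel₀ hl1.ne', Real.rpow_one]
      _ ≤ (c⁻¹) ^ l1⁻¹ := Real.rpow_le_rpow hrpos.le hle (inv_nonneg.mpr hl1.le)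
  -- S is compact
  have hSclosed : IsClosed S := isClosed_eq hV1c continuous_const
  have hScompact : IsCompact S :=
    (isCompact_closedBall (0 : Fin m → ℝ) _).of_isClosed_subset hSclosed hSsub
  -- S is nonempty: rescale any nonzero vector onto the level set
  have hrescale : ∀ r : Fin m → ℝ, r ≠ 0 →
      ∃ z ∈ S, V2 r = (V1 r) ^ (l2 / l1) * V2 z := by
    intro r hr
    set t : ℝ := V1 r with ht
    have htpos : 0 < t := hV1pos r hr
    set ε : ℝ := t ^ (-l1⁻¹) with hε
    have hεpos : 0 < ε := Real.rpow_pos_of_pos htpos _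
    refine ⟨ε • r, ?_, ?_⟩
    · show V1 (ε • r) = 1
      rw [hV1hom ε hεpos r, hε, ← Real.rpow_mul htpos.le, neg_mul,
        inv_mul_cancel₀ hl1.ne', Real.rpow_neg_one, inv_mul_cancel₀ htpos.ne']
    · have h2 := hV2hom ε hεpos r
      have hε2 : ε ^ l2 = t ^ (-(l2 / l1)) := by
        rw [hε, ← Real.rpow_mul htpos.le]
        ring_nf
      rw [h2, hε2, ← mul_assoc, ← Real.rpow_add htpos, add_neg_cancel,
        Real.rpow_zero, one_mul]
  have hSne : S.Nonempty := by
    obtain ⟨x, hx⟩ := hx0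
    obtain ⟨z, hz, -⟩ := hrescale x hx
    exact ⟨z, hz⟩
  obtain ⟨za, hza, hamin⟩ := hScompact.exists_isMinOn hSne hV2c.continuousOn
  obtain ⟨zb, hzb, hbmax⟩ := hScompact.exists_isMaxOn hSne hV2c.continuousOn
  refine ⟨V2 za, V2 zb, ⟨⟨za, hza, rfl⟩, ?_⟩, ⟨⟨zb, hzb, rfl⟩, ?_⟩, ?_⟩
  · rintro y ⟨z, hz, rfl⟩; exact hamin hz
  · rintro y ⟨z, hz, rfl⟩; exact hbmax hz
  · intro r
    by_cases hr : r = 0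
    · subst hr
      rw [hV1zero, hV20, Real.zero_rpow (by positivity : l2 / l1 ≠ 0)]
      simp
    · obtain ⟨z, hz, hzeq⟩ := hrescale r hr
      have htpos : 0 < V1 r := hV1pos r hr
      have hp : 0 < (V1 r) ^ (l2 / l1) := Real.rpow_pos_of_pos htpos _
      have h1 : V2 za ≤ V2 z := hamin hz
      have h2 : V2 z ≤ V2 zb := hbmax hz
      constructor
      · rw [hzeq]; nlinarith
      · rw [hzeq]; nlinarith
end

section
/- Let f : [0,∞) → ℝ be differentiable and suppose lim_{t→∞} f(t) exists (is a finite real number). If the derivative can be written as f′(t) = g₁(t) + g₂(t), where g₁ : [0,∞) → ℝ is uniformly continuous and lim_{t→∞} g₂(t) = 0, then lim_{t→∞} f′(t) = 0 and lim_{t→∞} g₁(t) = 0. -/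
/-- **Barbalat-type lemma.** Let `f : [0,∞) → ℝ` be differentiable
with `lim_{t→∞} f(t) = C` finite. If `f'(t) = g₁(t) + g₂(t)` on `[0,∞)` with `g₁`
uniformly continuous on `[0,∞)` and `g₂(t) → 0`, then `f'(t) → 0` and `g₁(t) → 0`
as `t → ∞`. -/
theorem barbalat_split
    (f g1 g2 : ℝ → ℝ) (C : ℝ)
    (hf : ∀ t ∈ Set.Ici (0 : ℝ),
      HasDerivWithinAt f (g1 t + g2 t) (Set.Ici 0) t)
    (hg1 : UniformContinuousOn g1 (Set.Ici 0))
    (hg2 : Filter.Tendsto g2 Filter.atTop (nhds 0))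
    (hflim : Filter.Tendsto f Filter.atTop (nhds C)) :
    Filter.Tendsto (fun t => g1 t + g2 t) Filter.atTop (nhds 0) ∧
    Filter.Tendsto g1 Filter.atTop (nhds 0) := by
  have hg1lim : Filter.Tendsto g1 Filter.atTop (nhds 0) := by
    by_contra hne
    rw [Metric.tendsto_atTop] at hne
    push_neg at hne
    obtain ⟨ε, hε, hfreq⟩ := hne
    -- uniform continuity: get δ for ε/2
    obtain ⟨δ, hδ, hδuc⟩ := Metric.uniformContinuousOn_iff.1 hg1 (ε/2) (by linarith)
    set d : ℝ := δ/2 with hd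
    have hdpos : 0 < d := by positivity
    -- g2 small eventually
    obtain ⟨N2, hN2⟩ := (Metric.tendsto_atTop.1 hg2) (ε/4) (by linarith)
    -- f close to C eventually
    obtain ⟨N1, hN1⟩ := (Metric.tendsto_atTop.1 hflim) (ε*d/16) (by positivity)
    obtain ⟨t, ht, htg1⟩ := hfreq (max (max N1 N2) 0)
    have ht0 : (0:ℝ) ≤ t := le_trans (le_max_right _ _) ht
    have htN1 : N1 ≤ t := le_trans (le_trans (le_max_left _ _) (le_max_left _ _)) ht
    have htN2 : N2 ≤ t := le_trans (le_trans (le_max_right _ _) (le_max_left _ _)) ht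
    have htg1' : ε ≤ |g1 t| := by
      simpa [Real.dist_eq] using htg1
    -- f(t+d) - f t is small
    have hfd : |f (t+d) - f t| < ε*d/8 := by
      have h1 := hN1 t htN1
      have h2 := hN1 (t+d) (by linarith)
      rw [Real.dist_eq] at h1 h2
      calc |f (t+d) - f t| ≤ |f (t+d) - C| + |C - f t| := abs_sub_le _ _ _
        _ = |f (t+d) - C| + |f t - C| := by rw [abs_sub_comm C (f t)]
        _ < ε*d/16 + ε*d/16 := add_lt_add h2 h1
        _ = ε*d/8 := by ring
    -- continuity of f on [t, t+d]
    have hfc : ContinuousOn f (Set.Icc t (t+d)) := fun x hx =>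
      ((hf x (le_trans ht0 hx.1)).continuousWithinAt).mono (fun y hy => le_trans ht0 hy.1)
    have hIoo : Set.Ioo t (t+d) ⊆ Set.Ici (0:ℝ) := fun x hx => le_of_lt (lt_of_le_of_lt ht0 hx.1)
    have hderiv : ∀ x ∈ Set.Ioo t (t+d), HasDerivAt f (g1 x + g2 x) x := by
      intro x hx
      exact (hf x (hIoo hx)).hasDerivAt (Ici_mem_nhds (lt_of_le_of_lt ht0 hx.1))
    have hdiff : DifferentiableOn ℝ f (interior (Set.Icc t (t+d))) := by
      rw [interior_Icc]
      exact fun x hx => ((hderiv x hx).differentiableAt).differentiableWithinAt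
    have hderiv' : ∀ x ∈ Set.Ioo t (t+d), deriv f x = g1 x + g2 x := fun x hx =>
      (hderiv x hx).deriv
    -- bounds on g1, g2 on the interval
    have hg1close : ∀ x ∈ Set.Ioo t (t+d), |g1 x - g1 t| < ε/2 := by
      intro x hx
      have := hδuc x (hIoo hx) t ht0 (by
        rw [Real.dist_eq, abs_of_nonneg (by linarith [hx.1])]
        linarith [hx.2, hdpos])
      rwa [Real.dist_eq] at this
    have hg2small : ∀ x ∈ Set.Ioo t (t+d), |g2 x| < ε/4 := by
      intro x hx
      have := hN2 x (le_trans htN2 (le_of_lt hx.1))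
      simpa [Real.dist_eq] using this
    rcases le_abs.mp htg1' with hpos | hneg
    · -- g1 t ≥ ε : derivative ≥ ε/4 on interval
      have hge : ∀ x ∈ interior (Set.Icc t (t+d)), ε/4 ≤ deriv f x := by
        rw [interior_Icc]
        intro x hx
        rw [hderiv' x hx]
        have h1 := abs_lt.1 (hg1close x hx)
        have h2 := abs_lt.1 (hg2small x hx)
        linarith [h1.1, h2.1]
      have := (convex_Icc t (t+d)).mul_sub_le_image_sub_of_le_deriv hfc hdiff hge
        t (Set.left_mem_Icc.2 (by linarith)) (t+d) (Set.right_mem_Icc.2 (by linarith))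
        (by linarith)
      have habs := abs_lt.1 hfd
      have : ε/4 * d ≤ f (t+d) - f t := by simpa using this
      nlinarith [habs.2]
    · -- g1 t ≤ -ε
      have hle : ∀ x ∈ interior (Set.Icc t (t+d)), deriv f x ≤ -(ε/4) := by
        rw [interior_Icc]
        intro x hx
        rw [hderiv' x hx]
        have h1 := abs_lt.1 (hg1close x hx)
        have h2 := abs_lt.1 (hg2small x hx)
        linarith [h1.2, h2.2]
      have := (convex_Icc t (t+d)).image_sub_le_mul_sub_of_deriv_le hfc hdiff hle
        t (Set.left_mem_Icc.2 (by linarith)) (t+d) (Set.right_mem_Icc.2 (by linarith))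
        (by linarith)
      have habs := abs_lt.1 hfd
      have : f (t+d) - f t ≤ -(ε/4) * d := by simpa using this
      nlinarith [habs.1]
  refine ⟨?_, hg1lim⟩
  simpa using hg1lim.add hg2
end

section
/- Let V : [0,∞) → ℝ be differentiable with V(t) ≥ 0 for all t, and suppose there exist constants K > 0 and α ∈ (0,1) such that V′(t) ≤ −K · V(t)^α for all t ≥ 0. Then V(t) = 0 for all t ≥ V(0)^{1−α} / (K (1−α)). -/
/-!
While `V > 0`, the chain rule gives `(V ^ (1 - α))' = (1 - α) V' V ^ (-α) ≤ -K (1 - α)`, so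
`V ^ (1 - α)` falls at rate at least `K (1 - α)` and cannot stay positive beyond time
`V 0 ^ (1 - α) / (K (1 - α))`. Since `V' ≤ 0`, `V` is antitone, so `V t > 0` would force
`V > 0` on all of `[0, t]`.
-/

open Set Real

theorem antitoneOn_rpow_one_sub_add_mul {V V' : ℝ → ℝ} {D : Set ℝ} {K α : ℝ}
    (hD : Convex ℝ D) (hα : α ≤ 1) (hcont : ContinuousOn V D)
    (hderiv : ∀ x ∈ interior D, HasDerivAt V (V' x) x) (hpos : ∀ x ∈ D, 0 < V x)
    (hV' : ∀ x ∈ interior D, V' x ≤ -K * V x ^ α) :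
    AntitoneOn (fun s => V s ^ (1 - α) + K * (1 - α) * s) D := by
  have hcontW : ContinuousOn (fun s => V s ^ (1 - α) + K * (1 - α) * s) D :=
    (hcont.rpow_const fun x hx => Or.inl (hpos x hx).ne').add
      (continuousOn_const.mul continuousOn_id)
  refine antitoneOn_of_hasDerivWithinAt_nonpos hD hcontW (fun x hx =>
    (((hderiv x hx).rpow_const (Or.inl (hpos x (interior_subset hx)).ne')).add
      ((hasDerivAt_id x).const_mul (K * (1 - α)))).hasDerivWithinAt) fun x hx => ?_
  have hVx := hpos x (interior_subset hx)
  have hquot : V' x * V x ^ (-α) ≤ -K :=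
    calc V' x * V x ^ (-α) ≤ -K * V x ^ α * V x ^ (-α) :=
          mul_le_mul_of_nonneg_right (hV' x hx) (rpow_nonneg hVx.le _)
      _ = -K := by rw [mul_assoc, ← rpow_add hVx, add_neg_cancel, rpow_zero, mul_one]
  rw [show 1 - α - 1 = -α by ring, mul_one]
  nlinarith [mul_nonneg (sub_nonneg.2 hα) (sub_nonneg.2 hquot)]

/-- **finite-time stability.** Let `V : [0,∞) → ℝ` be differentiable
and nonnegative, and suppose there are `K > 0` and `α ∈ (0,1)` with
`V'(t) ≤ -K V(t)^α` for all `t ≥ 0` (real power). Then `V(t) = 0` for all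
`t ≥ V(0)^{1-α} / (K (1-α))`. -/
theorem finite_time_settling
    (V V' : ℝ → ℝ) (K α : ℝ) (hK : 0 < K) (hα : α ∈ Set.Ioo (0 : ℝ) 1)
    (hVnn : ∀ t ∈ Set.Ici (0 : ℝ), 0 ≤ V t)
    (hV : ∀ t ∈ Set.Ici (0 : ℝ), HasDerivWithinAt V (V' t) (Set.Ici 0) t)
    (hV' : ∀ t ∈ Set.Ici (0 : ℝ), V' t ≤ -K * V t ^ α) :
    ∀ t : ℝ, V 0 ^ (1 - α) / (K * (1 - α)) ≤ t → V t = 0 := by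
  have hcont : ContinuousOn V (Ici 0) := fun x hx => (hV x hx).continuousWithinAt
  have hderiv : ∀ x ∈ Ioi (0 : ℝ), HasDerivAt V (V' x) x := fun x hx =>
    (hV x (Ioi_subset_Ici_self hx)).hasDerivAt (Ici_mem_nhds hx)
  have hanti : AntitoneOn V (Ici 0) := by
    refine antitoneOn_of_hasDerivWithinAt_nonpos (f' := V') (convex_Ici 0) hcont ?_ ?_ <;>
      intro x hx <;> rw [interior_Ici] at *
    · exact (hderiv x hx).hasDerivWithinAt
    · have hx₀ := Ioi_subset_Ici_self hx
      nlinarith [hV' x hx₀, rpow_nonneg (hVnn x hx₀) α]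
  have hK1 : 0 < K * (1 - α) := mul_pos hK (sub_pos.2 hα.2)
  intro t ht
  have ht0 : 0 ≤ t := (div_nonneg (rpow_nonneg (hVnn 0 self_mem_Ici) _) hK1.le).trans ht
  by_contra hVt
  have hpos : ∀ s ∈ Icc 0 t, 0 < V s := fun s hs =>
    ((hVnn t ht0).lt_of_ne' hVt).trans_le (hanti hs.1 ht0 hs.2)
  have hdecay := antitoneOn_rpow_one_sub_add_mul (convex_Icc 0 t) hα.2.le
    (hcont.mono Icc_subset_Ici_self)
    (fun x hx => hderiv x (interior_Icc.subset hx).1) hpos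
    (fun x hx => hV' x (interior_Icc.subset hx).1.le) ⟨le_rfl, ht0⟩ ⟨ht0, le_rfl⟩ ht0
  simp only [mul_zero, add_zero] at hdecay
  rw [div_le_iff₀ hK1] at ht
  linarith [rpow_pos_of_pos (hpos t ⟨ht0, le_rfl⟩) (1 - α)]
end
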